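/- arXiv:1704.06971 — 4 statements merged into one kernel-verified Lean document; each statement's English description precedes it below -/
import Mathlib

section
/- The step quasinorm ρ satisfies ρ(Ax) = b·ρ(x) for every x ∈ ℝⁿ. Moreover, there exists a smallest positive integer ω such that 2B₀ ⊆ A^ω(B₀), and with this ω one has the quasi-triangle inequality ρ(x + y) ≤ b^ω (ρ(x) + ρ(y)) for all x, y ∈ ℝⁿ; in particular ρ is a homogeneous quasi-norm associated with A with doubling constant c = b^ω. -/
open MeasureTheory Filter Set Metric
open scoped ENNReal NNReal Topology RealInnerProductSpace BigOperators

noncomputable section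

abbrev Euc (n : ℕ) := EuclideanSpace ℝ (Fin n)

def appE {n : ℕ} (A : Matrix (Fin n) (Fin n) ℝ) (x : Euc n) : Euc n := WithLp.toLp 2 (A.mulVec x)

def IsExpansive {n : ℕ} (A : Matrix (Fin n) (Fin n) ℝ) : Prop :=
  ∀ z ∈ spectrum ℂ (A.map Complex.ofReal), 1 < ‖z‖

def eChar (t : ℝ) : ℂ := Complex.exp (2 * Real.pi * Complex.I * t)

structure EllipsoidFamily (n : ℕ) (A : Matrix (Fin n) (Fin n) ℝ) (b : ℝ) where
  B : ℤ → Set (Euc n)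
  ell : ∃ T : Euc n ≃L[ℝ] Euc n, B 0 = T '' Metric.ball (0 : Euc n) 1
  vol : ∀ j : ℤ, volume (B j) = ENNReal.ofReal (b ^ j)
  incl : B 0 ⊆ appE A '' B 0
  dil : ∀ j : ℤ, B j = appE (A ^ j) '' B 0
  mono : ∀ j : ℤ, B j ⊆ B (j + 1)
  iUnion_eq : ⋃ j : ℤ, B j = Set.univ
  iInter_eq : ⋂ j : ℤ, B j = {0}

def Mihlin {n : ℕ} (A' : Matrix (Fin n) (Fin n) ℝ) (Bs : ℤ → Set (Euc n))
    (N : ℕ) (CN : ℝ) (m : Euc n → ℂ) : Prop :=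
  ∀ k : ℕ, k ≤ N → ∀ d : Fin k → Fin n, ∀ j : ℤ, ∀ ξ ∈ Bs (j + 1) \ Bs j,
    ‖iteratedFDerivWithin ℝ k (fun u => m (appE (A' ^ j) u)) ({0}ᶜ : Set (Euc n))
        (appE (A' ^ (-j)) ξ) (fun i => EuclideanSpace.single (d i) 1)‖ ≤ CN

def pdIter {n : ℕ} (k : ℕ) (d : Fin k → Fin n) (f : Euc n → ℂ) (x : Euc n) : ℂ :=
  iteratedFDeriv ℝ k f x fun i => EuclideanSpace.single (d i) 1

def Kfun {n : ℕ} (A' : Matrix (Fin n) (Fin n) ℝ) (m ψ : Euc n → ℂ) (j : ℤ) (x : Euc n) : ℂ :=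
  ∫ ξ : Euc n, m ξ * ψ (appE (A' ^ (-j)) ξ) * eChar ⟪x, ξ⟫

def IsLPFunction {n : ℕ} (A' : Matrix (Fin n) (Fin n) ℝ) (Bs : ℤ → Set (Euc n))
    (ψ : Euc n → ℂ) : Prop :=
  ContDiff ℝ (⊤ : ℕ∞) ψ ∧ HasCompactSupport ψ ∧ tsupport ψ ⊆ Bs 1 ∧ (∀ ξ ∈ Bs (-1), ψ ξ = 0) ∧
    ∀ ξ : Euc n, ξ ≠ 0 →
      {j : ℤ | ψ (appE (A' ^ (-j)) ξ) ≠ 0}.Finite ∧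
      ∑ᶠ j : ℤ, ψ (appE (A' ^ (-j)) ξ) = 1

def opNorm {n : ℕ} (M : Matrix (Fin n) (Fin n) ℝ) : ℝ :=
  ‖(Matrix.toEuclideanCLM (𝕜 := ℝ) M : Euc n →L[ℝ] Euc n)‖

def mIdx (n s : ℕ) : Finset (Fin n → ℕ) :=
  (Fintype.piFinset fun _ : Fin n => Finset.range (s + 1)).filter fun β => (∑ i, β i) ≤ s

def molNorm {n : ℕ} (q' : ℝ≥0∞) (θ d : ℝ) (ρ : Euc n → ℝ) (x₀ : Euc n) (M : Euc n → ℂ) : ℝ≥0∞ :=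
  eLpNorm M q' volume ^ (1 - θ) *
    eLpNorm (fun x => ρ (x - x₀) ^ d • M x) q' volume ^ θ

def projQ {n : ℕ} (s : ℕ) (A : Matrix (Fin n) (Fin n) ℝ) (b : ℝ) (Bs : ℤ → Set (Euc n))
    (Q : (Fin n → ℕ) → Euc n → ℂ) (M : Euc n → ℂ) (j : ℤ) (x : Euc n) : ℂ :=
  ∑ β ∈ mIdx n s,
    (((b ^ (-j) : ℝ) : ℂ) * ∫ u in Bs j, M u * (starRingEnd ℂ) (Q β (appE (A ^ (-j)) u))) *
      Q β (appE (A ^ (-j)) x)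


namespace Statement2Aux

/-- The linear equivalence `x ↦ A.mulVec x` for an invertible matrix. -/
def appEquiv {n : ℕ} (M : Matrix (Fin n) (Fin n) ℝ) (h : IsUnit M.det) :
    Euc n ≃ₗ[ℝ] Euc n where
  toFun := appE M
  invFun := appE M⁻¹
  map_add' x y := by simp [appE, Matrix.mulVec_add]
  map_smul' c x := by simp [appE, Matrix.mulVec_smul]
  left_inv x := by
    show appE M⁻¹ (appE M x) = x
    simp only [appE, WithLp.ofLp_toLp, Matrix.mulVec_mulVec, Matrix.nonsing_inv_mul M h, Matrix.one_mulVec, WithLp.toLp_ofLp]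
  right_inv x := by
    show appE M (appE M⁻¹ x) = x
    simp only [appE, WithLp.ofLp_toLp, Matrix.mulVec_mulVec, Matrix.mul_nonsing_inv M h, Matrix.one_mulVec, WithLp.toLp_ofLp]

lemma appE_injective {n : ℕ} (M : Matrix (Fin n) (Fin n) ℝ) (h : IsUnit M.det) :
    Function.Injective (appE M) :=
  (appEquiv M h).injective

lemma appE_isOpenMap {n : ℕ} (M : Matrix (Fin n) (Fin n) ℝ) (h : IsUnit M.det) :
    IsOpenMap (appE M) :=
  (appEquiv M h).toContinuousLinearEquiv.isOpenMap

end Statement2Aux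

open Statement2Aux in
/-- the step quasinorm is homogeneous of degree `b` under `A`, and,
with `ω` the smallest positive integer such that `2B₀ ⊆ A^ω(B₀)`, it satisfies the
quasi-triangle inequality with doubling constant `b^ω`. -/
theorem statement2 {n : ℕ} (A : Matrix (Fin n) (Fin n) ℝ) (b : ℝ)
    (hA : IsExpansive A) (hb : b = |A.det|)
    (E : EllipsoidFamily n A b) (ρ : Euc n → ℝ)
    (hρ0 : ρ 0 = 0)
    (hρ : ∀ j : ℤ, ∀ x ∈ E.B (j + 1) \ E.B j, ρ x = b ^ j) :
    (∀ x : Euc n, ρ (appE A x) = b * ρ x) ∧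
    ∃ ω : ℕ, 0 < ω ∧ (∀ x ∈ E.B 0, (2 : ℝ) • x ∈ E.B (ω : ℤ)) ∧
      (∀ ω' : ℕ, 0 < ω' → (∀ x ∈ E.B 0, (2 : ℝ) • x ∈ E.B (ω' : ℤ)) → ω ≤ ω') ∧
      ∀ x y : Euc n, ρ (x + y) ≤ b ^ (ω : ℤ) * (ρ x + ρ y) := by
  classical
  -- basic facts about `b`
  have hb1 : (1:ℝ) ≤ b := by
    have hm : volume (E.B 0) ≤ volume (E.B (0+1)) := measure_mono (E.mono 0)
    rw [E.vol 0, E.vol (0+1)] at hm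
    norm_num at hm
    exact ENNReal.one_le_ofReal.mp (by simpa using hm)
  have hb0 : (0:ℝ) < b := lt_of_lt_of_le one_pos hb1
  have hbne : b ≠ 0 := ne_of_gt hb0
  have hdet : IsUnit A.det := by
    refine isUnit_iff_ne_zero.mpr fun h => ?_
    rw [hb, h, abs_zero] at hb0
    exact lt_irrefl _ hb0
  have hdetz : ∀ j : ℤ, IsUnit ((A ^ j).det) := fun j => hdet.det_zpow j
  -- monotonicity
  have hmono : ∀ j k : ℤ, j ≤ k → E.B j ⊆ E.B k := by
    intro j k h
    obtain ⟨d, rfl⟩ := Int.le.dest h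
    clear h
    induction d with
    | zero => simpa using subset_rfl
    | succ d ih =>
      have hrw : j + ((d + 1 : ℕ) : ℤ) = (j + (d : ℕ)) + 1 := by push_cast; ring
      rw [hrw]
      exact ih.trans (E.mono _)
  -- composition facts
  have hcomp : ∀ j k : ℤ, appE (A ^ j) '' E.B k = E.B (j + k) := by
    intro j k
    have hfun : (appE (A ^ j) ∘ appE (A ^ k)) = appE (A ^ (j + k)) := by
      funext x
      show appE (A ^ j) (appE (A ^ k) x) = appE (A ^ (j + k)) x
      simp only [appE, WithLp.ofLp_toLp, Matrix.mulVec_mulVec]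
      rw [Matrix.zpow_add hdet j k]
    rw [E.dil k, ← Set.image_comp, hfun, ← E.dil (j + k)]
  have hstep : ∀ j : ℤ, appE A '' E.B j = E.B (j + 1) := by
    intro j
    have h1 : appE A '' E.B j = appE (A ^ (1:ℤ)) '' E.B j := by rw [zpow_one]
    rw [h1, hcomp 1 j, add_comm]
  -- classification of nonzero points
  have hclass : ∀ x : Euc n, x ≠ 0 → ∃ j : ℤ, x ∈ E.B (j + 1) \ E.B j := by
    intro x hx
    have hU : x ∈ ⋃ j : ℤ, E.B j := by rw [E.iUnion_eq]; trivial
    obtain ⟨k, hk⟩ := Set.mem_iUnion.mp hU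
    have hNI : ∃ m : ℤ, x ∉ E.B m := by
      by_contra h
      push_neg at h
      have hmem : x ∈ ⋂ j : ℤ, E.B j := Set.mem_iInter.mpr h
      rw [E.iInter_eq] at hmem
      exact hx hmem
    obtain ⟨m, hm⟩ := hNI
    have hbdd : ∀ z : ℤ, x ∈ E.B z → m + 1 ≤ z := by
      intro z hz
      by_contra h
      push_neg at h
      exact hm (hmono z m (by omega) hz)
    obtain ⟨j0, hj0, hleast⟩ :=
      Int.exists_least_of_bdd (P := fun j => x ∈ E.B j) ⟨m + 1, hbdd⟩ ⟨k, hk⟩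
    refine ⟨j0 - 1, ?_, ?_⟩
    · simpa using hj0
    · intro hmem
      have := hleast _ hmem
      omega
  -- nonnegativity of ρ
  have hρnn : ∀ x : Euc n, 0 ≤ ρ x := by
    intro x
    rcases eq_or_ne x 0 with rfl | hx
    · rw [hρ0]
    · obtain ⟨j, hj⟩ := hclass x hx
      rw [hρ j x hj]
      positivity
  -- homogeneity
  have hhom : ∀ x : Euc n, ρ (appE A x) = b * ρ x := by
    intro x
    rcases eq_or_ne x 0 with rfl | hx
    · have h0 : appE A (0 : Euc n) = 0 := by
        simp [appE]
      rw [h0, hρ0, mul_zero]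
    · obtain ⟨j, hj1, hj2⟩ := hclass x hx
      have hx1 : appE A x ∈ E.B (j + 1 + 1) := by
        rw [← hstep (j + 1)]
        exact ⟨x, hj1, rfl⟩
      have hx2 : appE A x ∉ E.B (j + 1) := by
        intro hmem
        rw [← hstep j] at hmem
        obtain ⟨y, hy, hyx⟩ := hmem
        exact hj2 ((appE_injective A hdet hyx) ▸ hy)
      rw [hρ (j + 1) _ ⟨hx1, hx2⟩, hρ j x ⟨hj1, hj2⟩, zpow_add_one₀ hbne, mul_comm]
  refine ⟨hhom, ?_⟩
  -- structure of B 0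
  obtain ⟨T, hT⟩ := E.ell
  have hconv : Convex ℝ (E.B 0) := by
    rw [hT]
    exact (convex_ball (0 : Euc n) 1).linear_image T.toLinearEquiv.toLinearMap
  have hopen : ∀ j : ℤ, IsOpen (E.B j) := by
    intro j
    rw [E.dil j, hT]
    exact (appE_isOpenMap _ (hdetz j)) _ (T.isOpenMap _ isOpen_ball)
  -- existence of some ω
  have hKc : IsCompact (T '' Metric.closedBall (0 : Euc n) 2) :=
    (isCompact_closedBall _ _).image T.continuous
  have hsub : ∀ x ∈ E.B 0, (2:ℝ) • x ∈ T '' Metric.closedBall (0 : Euc n) 2 := by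
    intro x hx
    rw [hT] at hx
    obtain ⟨y, hy, rfl⟩ := hx
    refine ⟨(2:ℝ) • y, ?_, by exact _root_.map_smul T 2 y⟩
    have hy1 : ‖y‖ < 1 := by simpa using mem_ball_zero_iff.mp hy
    rw [mem_closedBall_zero_iff, norm_smul]
    simp only [Real.norm_ofNat]
    nlinarith
  have hdir : Directed (· ⊆ ·) E.B := fun j k =>
    ⟨max j k, hmono j _ (le_max_left _ _), hmono k _ (le_max_right _ _)⟩
  obtain ⟨j, hj⟩ := hKc.elim_directed_cover E.B hopen
    (by rw [E.iUnion_eq]; exact Set.subset_univ _) hdir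
  have hP : ∃ w : ℕ, 0 < w ∧ ∀ x ∈ E.B 0, (2:ℝ) • x ∈ E.B (w:ℤ) := by
    refine ⟨max 1 j.toNat, by omega, fun x hx => ?_⟩
    refine hmono j _ ?_ (hj (hsub x hx))
    have h1 := Int.self_le_toNat j
    have h2 : (j.toNat : ℤ) ≤ ((max 1 j.toNat : ℕ) : ℤ) := by
      exact_mod_cast Nat.le_max_right 1 j.toNat
    omega
  obtain ⟨hω1, hω2⟩ := Nat.find_spec hP
  refine ⟨Nat.find hP, hω1, hω2, fun ω' h1 h2 => Nat.find_min' hP ⟨h1, h2⟩, ?_⟩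
  set w : ℤ := (Nat.find hP : ℤ) with hwdef
  have hwnn : (0:ℤ) ≤ w := Int.natCast_nonneg _
  have hbw1 : (1:ℝ) ≤ b ^ w := one_le_zpow₀ hb1 hwnn
  have hbw0 : (0:ℝ) < b ^ w := zpow_pos hb0 w
  -- sum lemma
  have hsum : ∀ k : ℤ, ∀ x ∈ E.B k, ∀ y ∈ E.B k, x + y ∈ E.B (k + w) := by
    intro k x hx y hy
    rw [E.dil k] at hx hy
    obtain ⟨u, hu, rfl⟩ := hx
    obtain ⟨v, hv, rfl⟩ := hy
    have hmid : (1/2:ℝ) • u + (1/2:ℝ) • v ∈ E.B 0 :=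
      hconv hu hv (by norm_num) (by norm_num) (by norm_num)
    have h2 : (2:ℝ) • ((1/2:ℝ) • u + (1/2:ℝ) • v) ∈ E.B w := hω2 _ hmid
    have huv : u + v = (2:ℝ) • ((1/2:ℝ) • u + (1/2:ℝ) • v) := by
      rw [smul_add, smul_smul, smul_smul]
      norm_num
    have hadd : appE (A ^ k) u + appE (A ^ k) v = appE (A ^ k) (u + v) :=
      by simp [appE, Matrix.mulVec_add]
    rw [hadd, huv, ← hcomp k w]
    exact ⟨_, h2, rfl⟩
  -- key bound
  have key : ∀ x y : Euc n, ∀ jx jy : ℤ, jx ≤ jy →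
      x ∈ E.B (jx + 1) \ E.B jx → y ∈ E.B (jy + 1) \ E.B jy →
      ρ (x + y) ≤ b ^ w * (b ^ jx + b ^ jy) := by
    intro x y jx jy hle hx hy
    have hx' : x ∈ E.B (jy + 1) := hmono _ _ (by omega) hx.1
    have hxy : x + y ∈ E.B (jy + 1 + w) := hsum _ x hx' y hy.1
    rcases eq_or_ne (x + y) 0 with h0 | h0
    · rw [h0, hρ0]
      positivity
    · obtain ⟨m, hm1, hm2⟩ := hclass _ h0
      rw [hρ m _ ⟨hm1, hm2⟩]
      have hmlt : m < jy + 1 + w := by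
        by_contra h
        push_neg at h
        exact hm2 (hmono _ _ h hxy)
      calc b ^ m ≤ b ^ (jy + w) := zpow_le_zpow_right₀ hb1 (by omega)
        _ = b ^ w * b ^ jy := by rw [zpow_add₀ hbne, mul_comm]
        _ ≤ b ^ w * b ^ jx + b ^ w * b ^ jy := le_add_of_nonneg_left (by positivity)
        _ = b ^ w * (b ^ jx + b ^ jy) := (mul_add _ _ _).symm
  -- final quasi-triangle inequality
  intro x y
  rcases eq_or_ne x 0 with rfl | hx
  · rw [zero_add, hρ0, zero_add]
    nlinarith [hρnn y]
  rcases eq_or_ne y 0 with rfl | hy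
  · rw [add_zero, hρ0, add_zero]
    nlinarith [hρnn x]
  obtain ⟨jx, hjx⟩ := hclass x hx
  obtain ⟨jy, hjy⟩ := hclass y hy
  rw [hρ jx x hjx, hρ jy y hjy]
  rcases le_total jx jy with h | h
  · exact key x y jx jy h hjx hjy
  · calc ρ (x + y) = ρ (y + x) := by rw [add_comm]
      _ ≤ b ^ w * (b ^ jy + b ^ jx) := key y x jy jx h hjy hjx
      _ = b ^ w * (b ^ jx + b ^ jy) := by ring
end
end

section
/- Let (p,q,s,d) be an admissible quadruple. Then there exists a constant C, independent of the atom, such that every (p,q,s)-atom a supported in x₀ + Bⱼ is a (p,q,s,d)-molecule centered at x₀ with molecular norm N(a) = ‖a‖_{L^q}^{1−θ}·‖ρ(·−x₀)^d·a‖_{L^q}^{θ} ≤ C. -/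
open MeasureTheory Filter Set Metric
open scoped ENNReal NNReal Topology RealInnerProductSpace BigOperators Pointwise

noncomputable section

lemma stmt11_roots_mem_spectrum {n : ℕ} (M : Matrix (Fin n) (Fin n) ℂ) {z : ℂ}
    (hz : z ∈ M.charpoly.roots) : z ∈ spectrum ℂ M := by
  rw [Polynomial.mem_roots'] at hz
  rw [spectrum.mem_iff]
  intro hunit
  have hdet := (Matrix.isUnit_iff_isUnit_det _).mp hunit
  have hkey : ((algebraMap ℂ (Matrix (Fin n) (Fin n) ℂ)) z - M).det
      = Polynomial.eval z M.charpoly := by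
    rw [Matrix.charpoly]
    have h := (RingHom.map_det (Polynomial.evalRingHom z) M.charmatrix).symm
    rw [show Polynomial.eval z M.charmatrix.det
        = (Polynomial.evalRingHom z) M.charmatrix.det from rfl, ← h]
    congr 1
    ext i j
    by_cases h : i = j <;>
      simp [h, Matrix.charmatrix, Matrix.algebraMap_matrix_apply, Matrix.sub_apply,
        Matrix.scalar_apply, Matrix.diagonal_apply]
  rw [hkey, hz.2] at hdet
  simp at hdet

lemma stmt11_abs_det {n : ℕ} (A : Matrix (Fin n) (Fin n) ℝ) :
    |A.det| = (((A.map Complex.ofReal).charpoly.roots).map (‖·‖)).prod := by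
  have h1 : (Complex.ofRealHom : ℝ →+* ℂ) A.det = (A.map Complex.ofReal).det := by
    rw [RingHom.map_det]; rfl
  have h2 := Matrix.det_eq_prod_roots_charpoly (A := A.map Complex.ofReal)
  calc |A.det| = ‖((Complex.ofRealHom : ℝ →+* ℂ) A.det)‖ := by
        simp
    _ = ‖((A.map Complex.ofReal).charpoly.roots).prod‖ := by rw [h1, h2]
    _ = (((A.map Complex.ofReal).charpoly.roots).map (‖·‖)).prod :=
        map_multiset_prod (normHom : ℂ →*₀ ℝ) _

lemma stmt11_one_le_prod (t : Multiset ℝ) (h : ∀ x ∈ t, (1:ℝ) ≤ x) : 1 ≤ t.prod := by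
  refine Multiset.prod_induction _ _ (fun a b ha hb => ?_) le_rfl h
  nlinarith

/-- every `(p,q,s)`-atom is a `(p,q,s,d)`-molecule with uniformly
bounded molecular norm. -/
theorem statement11 {n : ℕ} (A : Matrix (Fin n) (Fin n) ℝ) (b lm lp : ℝ)
    (hA : IsExpansive A) (hb : b = |A.det|) (hlm : 1 < lm)
    (heig : ∀ z ∈ spectrum ℂ (A.map Complex.ofReal),
      lm < ‖z‖ ∧ ‖z‖ < lp)
    (E : EllipsoidFamily n A b) (ρ : Euc n → ℝ)
    (hρ0 : ρ 0 = 0)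
    (hρ : ∀ j : ℤ, ∀ x ∈ E.B (j + 1) \ E.B j, ρ x = b ^ j)
    -- admissible quadruple (p, q, s, d) and θ
    (p : ℝ) (q : ℝ≥0∞) (s : ℕ) (d θ : ℝ)
    (hp0 : 0 < p) (hp1 : p ≤ 1) (hq1 : 1 ≤ q) (hpq : ENNReal.ofReal p < q)
    (hs : ⌊(1 / p - 1) * Real.log b / Real.log lm⌋ ≤ (s : ℤ))
    (hd : d > (s : ℝ) * (Real.log lp / Real.log b) + 1 - (q⁻¹).toReal)
    (hθ : θ = (1 / p - (q⁻¹).toReal) / d) :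
    ∃ C : ℝ≥0, ∀ (a : Euc n → ℂ) (x₀ : Euc n) (j : ℤ),
      Function.support a ⊆ (fun y => x₀ + y) '' E.B j →
      eLpNorm a q volume ≤ ENNReal.ofReal (b ^ ((j : ℝ) * ((q⁻¹).toReal - 1 / p))) →
      (∀ β : Fin n → ℕ, (∑ i, β i) ≤ s →
        Integrable (fun x : Euc n => (∏ i, ((x i : ℂ) ^ β i)) * a x) volume ∧
        ∫ x : Euc n, (∏ i, ((x i : ℂ) ^ β i)) * a x = 0) →
      molNorm q θ d ρ x₀ a ≤ (C : ℝ≥0∞) := by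
  classical
  set M := A.map Complex.ofReal with hM
  have habs : ∀ z ∈ M.charpoly.roots, lm < ‖z‖ ∧ ‖z‖ < lp :=
    fun z hz => heig z (stmt11_roots_mem_spectrum M hz)
  have hbprod : b = ((M.charpoly.roots).map (‖·‖)).prod := by
    rw [hb, stmt11_abs_det]
  have hmem1 : ∀ x ∈ (M.charpoly.roots).map (‖·‖), (1:ℝ) ≤ x := by
    intro x hx
    obtain ⟨z, hz, rfl⟩ := Multiset.mem_map.mp hx
    have := (habs z hz).1
    linarith
  have hb1 : 1 ≤ b := hbprod ▸ stmt11_one_le_prod _ hmem1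
  have hbpos : (0:ℝ) < b := lt_of_lt_of_le one_pos hb1
  -- the first term in the lower bound on d is nonnegative
  have hterm : 0 ≤ (s : ℝ) * (Real.log lp / Real.log b) := by
    rcases eq_or_ne M.charpoly.roots 0 with h0 | h0
    · rw [hbprod, h0]
      simp
    · obtain ⟨z, hz⟩ := Multiset.exists_mem_of_ne_zero h0
      have hza := habs z hz
      have hlp1 : 1 < lp := by linarith
      have hzmem : ‖z‖ ∈ (M.charpoly.roots).map (‖·‖) :=
        Multiset.mem_map_of_mem _ hz
      obtain ⟨t, ht⟩ := Multiset.exists_cons_of_mem hzmem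
      have htp : (1:ℝ) ≤ t.prod := by
        refine stmt11_one_le_prod _ (fun x hx => hmem1 x ?_)
        rw [ht]
        exact Multiset.mem_cons_of_mem hx
      have hb2 : 1 < b := by
        rw [hbprod, ht, Multiset.prod_cons]
        nlinarith
      have h1 : 0 < Real.log lp := Real.log_pos hlp1
      have h2 : 0 < Real.log b := Real.log_pos hb2
      positivity
  have hq'le : (q⁻¹).toReal ≤ 1 := by
    have h1 : q⁻¹ ≤ 1 := ENNReal.inv_le_one.mpr hq1
    calc (q⁻¹).toReal ≤ (1 : ℝ≥0∞).toReal := ENNReal.toReal_mono (by simp) h1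
      _ = 1 := by simp
  have hd0 : 0 < d := lt_of_le_of_lt (by linarith) hd
  have hq' : (q⁻¹).toReal < 1 / p := by
    rcases eq_or_ne q ⊤ with rfl | hqt
    · simp
      positivity
    · have hqp : p < q.toReal := (ENNReal.ofReal_lt_iff_lt_toReal hp0.le hqt).mp hpq
      have hqpos : 0 < q.toReal := lt_trans hp0 hqp
      rw [ENNReal.toReal_inv, one_div]
      exact inv_strictAnti₀ hp0 hqp
  have hθ0 : 0 < θ := by
    rw [hθ]
    have : 0 < 1 / p - (q⁻¹).toReal := by linarith
    positivity
  have hdθ : d * θ = 1 / p - (q⁻¹).toReal := by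
    rw [hθ]
    field_simp
  -- monotone family
  have hBmono : ∀ k l : ℤ, k ≤ l → E.B k ⊆ E.B l := by
    intro k l hkl
    exact Int.le_induction (motive := fun l _ => E.B k ⊆ E.B l) subset_rfl
      (fun l _ ih => ih.trans (E.mono l)) l hkl
  refine ⟨1, fun a x₀ j hsupp hsize _ => ?_⟩
  set q' : ℝ := (q⁻¹).toReal with hq'def
  set cR : ℝ := b ^ ((j : ℝ) * d) with hcRdef
  have hcR : 0 < cR := Real.rpow_pos_of_pos hbpos _
  -- pointwise bound
  have hpt : ∀ x, ‖ρ (x - x₀) ^ d • a x‖ ≤ ‖cR • a x‖ := by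
    intro x
    by_cases hax : a x = 0
    · simp [hax]
    rw [norm_smul, norm_smul]
    obtain ⟨y, hy, hxy⟩ := hsupp (Function.mem_support.mpr hax)
    have hyx : x - x₀ = y := by rw [← hxy]; exact add_sub_cancel_left _ _
    rw [hyx]
    rcases eq_or_ne y 0 with rfl | hy0
    · rw [hρ0, Real.zero_rpow hd0.ne']
      simp
      positivity
    · have hnot : ∃ m : ℤ, y ∉ E.B m := by
        by_contra hc
        push_neg at hc
        have hmem : y ∈ ⋂ k, E.B k := Set.mem_iInter.mpr hc
        rw [E.iInter_eq] at hmem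
        exact hy0 hmem
      obtain ⟨m, hm⟩ := hnot
      obtain ⟨k₀, hk₀, hleast⟩ := Int.exists_least_of_bdd (P := fun k => y ∈ E.B k)
        ⟨m + 1, fun z hz => by
          by_contra hcon
          exact hm (hBmono z m (by omega) hz)⟩ ⟨j, hy⟩
      have hnotk : y ∉ E.B (k₀ - 1) := fun h => by have := hleast _ h; omega
      have hk1 : y ∈ E.B (k₀ - 1 + 1) := by
        rw [show k₀ - 1 + 1 = k₀ by omega]
        exact hk₀
      have hρy : ρ y = b ^ (k₀ - 1) := hρ (k₀ - 1) y ⟨hk1, hnotk⟩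
      have hkj : k₀ ≤ j := hleast j hy
      have hρy_le : ρ y ≤ b ^ (j : ℤ) := by
        rw [hρy]
        exact zpow_le_zpow_right₀ hb1 (by omega)
      have hρy_nn : 0 ≤ ρ y := by
        rw [hρy]
        positivity
      have hkey : ρ y ^ d ≤ cR := by
        have h1 : ρ y ^ d ≤ ((b : ℝ) ^ (j : ℤ)) ^ d :=
          Real.rpow_le_rpow hρy_nn hρy_le hd0.le
        have h2 : ((b : ℝ) ^ (j : ℤ)) ^ d = cR := by
          rw [hcRdef, Real.rpow_mul hbpos.le, Real.rpow_intCast]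
        linarith
      have hnn : (0:ℝ) ≤ ρ y ^ d := Real.rpow_nonneg hρy_nn d
      have : ‖ρ y ^ d‖ ≤ ‖cR‖ := by
        rw [Real.norm_eq_abs, Real.norm_eq_abs, abs_of_nonneg hnn, abs_of_pos hcR]
        exact hkey
      exact mul_le_mul_of_nonneg_right this (norm_nonneg _)
  set Na := eLpNorm a q volume with hNa
  have h2 : eLpNorm (fun x => ρ (x - x₀) ^ d • a x) q volume ≤ ENNReal.ofReal cR * Na := by
    calc eLpNorm (fun x => ρ (x - x₀) ^ d • a x) q volume
        ≤ eLpNorm (cR • a) q volume := eLpNorm_mono hpt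
      _ = ‖cR‖₊ • Na := eLpNorm_const_smul _ _ _ _
      _ = ENNReal.ofReal cR * Na := by
          rw [ENNReal.smul_def, smul_eq_mul, ← Real.enorm_eq_ofReal hcR.le]; rfl
  rcases eq_or_ne Na 0 with h0 | h0
  · have hm0 : eLpNorm (fun x => ρ (x - x₀) ^ d • a x) q volume = 0 :=
      le_antisymm (by simpa [h0] using h2) zero_le
    have hmol : molNorm q θ d ρ x₀ a
        = Na ^ (1 - θ) * (eLpNorm (fun x => ρ (x - x₀) ^ d • a x) q volume) ^ θ := rfl
    rw [hmol, hm0, ENNReal.zero_rpow_of_pos hθ0, mul_zero]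
    exact zero_le
  · have hfin : Na ≠ ⊤ := (lt_of_le_of_lt hsize ENNReal.ofReal_lt_top).ne
    have hcalc : molNorm q θ d ρ x₀ a ≤ (ENNReal.ofReal cR) ^ θ *
        ENNReal.ofReal (b ^ ((j : ℝ) * (q' - 1 / p))) := by
      calc molNorm q θ d ρ x₀ a
          = Na ^ (1 - θ) * (eLpNorm (fun x => ρ (x - x₀) ^ d • a x) q volume) ^ θ := rfl
        _ ≤ Na ^ (1 - θ) * (ENNReal.ofReal cR * Na) ^ θ :=
            mul_le_mul_right (ENNReal.rpow_le_rpow h2 hθ0.le) _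
        _ = Na ^ (1 - θ) * ((ENNReal.ofReal cR) ^ θ * Na ^ θ) := by
            rw [ENNReal.mul_rpow_of_nonneg _ _ hθ0.le]
        _ = (ENNReal.ofReal cR) ^ θ * (Na ^ (1 - θ) * Na ^ θ) := by ring
        _ = (ENNReal.ofReal cR) ^ θ * Na := by
            rw [← ENNReal.rpow_add _ _ h0 hfin]
            norm_num
        _ ≤ (ENNReal.ofReal cR) ^ θ * ENNReal.ofReal (b ^ ((j : ℝ) * (q' - 1 / p))) :=
            mul_le_mul_right hsize _
    have hone : (ENNReal.ofReal cR) ^ θ * ENNReal.ofReal (b ^ ((j : ℝ) * (q' - 1 / p)))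
        = 1 := by
      rw [ENNReal.ofReal_rpow_of_pos hcR, hcRdef, ← Real.rpow_mul hbpos.le,
        ← ENNReal.ofReal_mul (Real.rpow_nonneg hbpos.le _), ← Real.rpow_add hbpos]
      have hz : (j : ℝ) * d * θ + (j : ℝ) * (q' - 1 / p) = 0 := by
        have h : d * θ + (q' - 1 / p) = 0 := by rw [hdθ]; ring
        calc (j : ℝ) * d * θ + (j : ℝ) * (q' - 1 / p)
            = (j : ℝ) * (d * θ + (q' - 1 / p)) := by ring
          _ = 0 := by rw [h]; ring
      rw [hz, Real.rpow_zero, ENNReal.ofReal_one]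
    calc molNorm q θ d ρ x₀ a ≤ _ := hcalc
      _ = 1 := hone
      _ = ((1 : ℝ≥0) : ℝ≥0∞) := by simp
end
end

section
/- Let M be a (p,q,s,d)-molecule centered at 0. For j ∈ ℤ define the projection π_j M(x) = Σ_{|α|≤s} ( b^{−j} ∫_{Bⱼ} M(u) · conj(Q_α(A^{−j} u)) du ) · Q_α(A^{−j} x). Then ∫_{Bⱼ} |π_j M(x)| dx → 0 as j → ∞. -/
open MeasureTheory Filter Set Metric
open scoped ENNReal NNReal Topology RealInnerProductSpace BigOperators Pointwise

noncomputable section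

set_option maxHeartbeats 1000000
set_option synthInstance.maxHeartbeats 400000

lemma coord_le_norm {n : ℕ} (x : EuclideanSpace ℂ (Fin n)) (i : Fin n) : ‖x i‖ ≤ ‖x‖ := by
  rw [EuclideanSpace.norm_eq]
  rw [show ‖x i‖ = Real.sqrt (‖x i‖ ^ 2) by rw [Real.sqrt_sq (norm_nonneg _)]]
  exact Real.sqrt_le_sqrt (Finset.single_le_sum (fun k _ => sq_nonneg ‖x k‖) (Finset.mem_univ i))

lemma entry_le_opnorm {n : ℕ} (B : Matrix (Fin n) (Fin n) ℂ) (i k : Fin n) :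
    ‖B i k‖ ≤ ‖(Matrix.toEuclideanCLM (𝕜 := ℂ) B : EuclideanSpace ℂ (Fin n) →L[ℂ] EuclideanSpace ℂ (Fin n))‖ := by
  set T := (Matrix.toEuclideanCLM (𝕜 := ℂ) B : EuclideanSpace ℂ (Fin n) →L[ℂ] EuclideanSpace ℂ (Fin n))
  set x : EuclideanSpace ℂ (Fin n) := EuclideanSpace.single k 1
  have h2 : (T x) i = B i k := by
    have h := congrFun (Matrix.ofLp_toEuclideanCLM (𝕜 := ℂ) B x) i
    rw [show (T x).ofLp i = (B.mulVec x.ofLp) i from h]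
    simp [x, Matrix.mulVec_single]
  have h3 : ‖x‖ = 1 := by
    rw [show x = EuclideanSpace.single k (1:ℂ) from rfl, EuclideanSpace.norm_single]
    exact norm_one
  calc ‖B i k‖ = ‖(T x) i‖ := by rw [h2]
    _ ≤ ‖T x‖ := coord_le_norm _ _
    _ ≤ ‖T‖ * ‖x‖ := T.le_opNorm x
    _ = ‖T‖ := by rw [h3, mul_one]

lemma expansive_isUnit_det {n : ℕ} (A : Matrix (Fin n) (Fin n) ℝ) (hA : IsExpansive A) :
    IsUnit A.det := by
  by_contra h
  have hdet : A.det = 0 := by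
    simpa [isUnit_iff_ne_zero] using h
  have hAc : (A.map Complex.ofReal).det = 0 := by
    have : A.map Complex.ofReal = Complex.ofRealHom.mapMatrix A := rfl
    rw [this, ← RingHom.map_det, hdet, map_zero]
  have h0 : (0 : ℂ) ∈ spectrum ℂ (A.map Complex.ofReal) := by
    rw [spectrum.zero_mem_iff]
    rw [Matrix.isUnit_iff_isUnit_det, hAc]
    exact not_isUnit_zero
  have := hA 0 h0
  simp only [norm_zero] at this
  linarith

lemma expansive_decay {n : ℕ} (A : Matrix (Fin n) (Fin n) ℝ) (hA : IsExpansive A) :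
    ∃ g : ℕ → ℝ, (∀ m, 0 ≤ g m) ∧ Tendsto g atTop (𝓝 0) ∧
      ∀ (m : ℕ) (i k : Fin n), |(A⁻¹ ^ m) i k| ≤ g m := by
  classical
  have hdet := expansive_isUnit_det A hA
  set Ac := A.map Complex.ofReal with hAcdef
  have hAdet0 : A.det ≠ 0 := by simpa [isUnit_iff_ne_zero] using hdet
  have hAcdet : IsUnit Ac.det := by
    have : Ac.det = Complex.ofReal A.det := by
      rw [show Ac = Complex.ofRealHom.mapMatrix A from rfl, ← RingHom.map_det]; rfl
    rw [this, isUnit_iff_ne_zero]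
    simpa using hAdet0
  have hinv_map : (A⁻¹).map Complex.ofReal = Ac⁻¹ := by
    refine (Matrix.inv_eq_right_inv ?_).symm
    have : Ac * (A⁻¹).map Complex.ofReal = (A * A⁻¹).map Complex.ofReal := by
      rw [show (A * A⁻¹).map Complex.ofReal
          = Complex.ofRealHom.mapMatrix (A * A⁻¹) from rfl, map_mul]; rfl
    rw [this, Matrix.mul_nonsing_inv _ hdet]
    exact Matrix.map_one _ Complex.ofReal_zero Complex.ofReal_one
  have hpow : ∀ m : ℕ, (A⁻¹ ^ m).map Complex.ofReal = Ac⁻¹ ^ m := by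
    intro m
    rw [show (A⁻¹ ^ m).map Complex.ofReal = Complex.ofRealHom.mapMatrix (A⁻¹ ^ m) from rfl,
      map_pow]
    rw [show Complex.ofRealHom.mapMatrix A⁻¹ = (A⁻¹).map Complex.ofReal from rfl, hinv_map]
  set T := (Matrix.toEuclideanCLM (𝕜 := ℂ) Ac :
    EuclideanSpace ℂ (Fin n) →L[ℂ] EuclideanSpace ℂ (Fin n)) with hTdef
  set S := (Matrix.toEuclideanCLM (𝕜 := ℂ) (Ac⁻¹) :
    EuclideanSpace ℂ (Fin n) →L[ℂ] EuclideanSpace ℂ (Fin n)) with hSdef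
  have hTS : T * S = 1 := by
    rw [hTdef, hSdef, ← map_mul, Matrix.mul_nonsing_inv _ hAcdet, map_one]
  have hST : S * T = 1 := by
    rw [hTdef, hSdef, ← map_mul, Matrix.nonsing_inv_mul _ hAcdet, map_one]
  set u : (EuclideanSpace ℂ (Fin n) →L[ℂ] EuclideanSpace ℂ (Fin n))ˣ :=
    ⟨T, S, hTS, hST⟩ with hudef
  have hspecT : spectrum ℂ T = spectrum ℂ Ac :=
    AlgEquiv.spectrum_eq (Matrix.toEuclideanCLM (𝕜 := ℂ) (n := Fin n)) Ac
  have hspecS : ∀ z ∈ spectrum ℂ S, ‖z‖₊ < 1 := by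
    intro z hz
    have hz0 : z ≠ 0 := by
      intro h0
      rw [h0, spectrum.zero_mem_iff] at hz
      exact hz ⟨u⁻¹, rfl⟩
    have hzi : z⁻¹ ∈ spectrum ℂ T := by
      have := (spectrum.inv_mem_iff (r := (Units.mk0 z hz0)⁻¹) (a := u)).mpr
      exact this (by rw [inv_inv]; exact hz)
    have h1 : 1 < ‖z⁻¹‖ := hA _ (hspecT ▸ hzi)
    rw [norm_inv] at h1
    have hza : 0 < ‖z‖ := by
      exact norm_pos_iff.mpr hz0
    have : ‖z‖ < 1 := by
      by_contra hcon
      push_neg at hcon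
      have : (‖z‖)⁻¹ ≤ 1 := inv_le_one_of_one_le₀ hcon
      linarith
    rw [← NNReal.coe_lt_coe]
    simpa [coe_nnnorm] using this
  have hrad : spectralRadius ℂ S < 1 := by
    rcases (spectrum ℂ S).eq_empty_or_nonempty with h | h
    · simp [spectralRadius, h]
    · have := spectrum.spectralRadius_lt_of_forall_lt_of_nonempty h (r := 1)
        (fun k hk => hspecS k hk)
      simpa using this
  obtain ⟨r, hr1, hr2⟩ := ENNReal.lt_iff_exists_nnreal_btwn.mp hrad
  have hrlt1 : (r : ℝ) < 1 := by exact_mod_cast hr2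
  have gelfand := spectrum.pow_nnnorm_pow_one_div_tendsto_nhds_spectralRadius S
  have hev : ∀ᶠ m : ℕ in atTop, (‖S ^ m‖₊ : ℝ≥0∞) ^ (1 / (m : ℝ)) < (r : ℝ≥0∞) :=
    gelfand.eventually_lt_const hr1
  have hev2 : ∀ᶠ m : ℕ in atTop, ‖S ^ m‖ ≤ (r : ℝ) ^ m := by
    filter_upwards [hev, eventually_ge_atTop 1] with m hm hm1
    have hm0 : (m : ℝ) ≠ 0 := by positivity
    have h2 := ENNReal.rpow_lt_rpow hm (by positivity : (0:ℝ) < (m : ℝ))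
    have e1 : ((‖S ^ m‖₊ : ℝ≥0∞) ^ (1/(m:ℝ))) ^ (m:ℝ) = (‖S ^ m‖₊ : ℝ≥0∞) := by
      rw [← ENNReal.rpow_mul, one_div_mul_cancel hm0, ENNReal.rpow_one]
    have e2 : ((r:ℝ≥0∞)) ^ (m:ℝ) = ((r ^ m : ℝ≥0) : ℝ≥0∞) := by
      rw [ENNReal.rpow_natCast, ← ENNReal.coe_pow]
    rw [e1, e2] at h2
    have h4 : ‖S ^ m‖₊ < r ^ m := by exact_mod_cast h2
    exact_mod_cast h4.le
  refine ⟨fun m => ‖S ^ m‖, fun m => norm_nonneg _, ?_, ?_⟩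
  · apply squeeze_zero' (Eventually.of_forall fun m => norm_nonneg _) hev2
    exact tendsto_pow_atTop_nhds_zero_of_lt_one r.2 hrlt1
  · intro m i k
    have h1 : ((A⁻¹ ^ m) i k : ℂ) = (Ac⁻¹ ^ m) i k := by
      rw [← hpow m]; rfl
    have h2 : |(A⁻¹ ^ m) i k| = ‖((Ac⁻¹ ^ m) i k : ℂ)‖ := by
      rw [← h1, Complex.norm_real]; rfl
    rw [h2]
    have h3 := entry_le_opnorm (Ac⁻¹ ^ m) i k
    rwa [map_pow] at h3


lemma mol_integrable_aux {n s : ℕ} (M : Euc n → ℂ)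
    (hM : ∀ δ : Fin n → ℕ, (∑ i, δ i) ≤ s →
      Integrable (fun u : Euc n => (∏ i, ((u i : ℂ) ^ δ i)) * M u) volume) :
    ∀ m : ℕ, ∀ δ : Fin n → ℕ, (∑ i, δ i) + m ≤ s →
      Integrable (fun u : Euc n =>
        (∏ i, |u i| ^ δ i) * ((1 + ∑ k, |u k|) ^ m * ‖M u‖)) volume := by
  intro m
  induction m with
  | zero =>
    intro δ hδ
    apply ((hM δ (by omega)).norm).congr
    filter_upwards with u
    simp [norm_prod, Complex.norm_real, Real.norm_eq_abs]
  | succ m ih =>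
    intro δ hδ
    have hprod : ∀ (u : Euc n) (k : Fin n),
        (∏ i, |u i| ^ (δ i + if i = k then 1 else 0)) = (∏ i, |u i| ^ δ i) * |u k| := by
      intro u k
      rw [show (∏ i, |u i| ^ (δ i + if i = k then 1 else 0))
          = ∏ i, (|u i| ^ δ i * |u i| ^ (if i = k then 1 else 0)) by
        refine Finset.prod_congr rfl fun i _ => ?_; rw [pow_add]]
      rw [Finset.prod_mul_distrib]
      congr 1
      rw [show (∏ i, |u i| ^ (if i = k then 1 else 0))
          = ∏ i, (if i = k then |u i| else 1) by
        refine Finset.prod_congr rfl fun i _ => ?_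
        split <;> simp]
      simp
    have key : ∀ k : Fin n, Integrable (fun u : Euc n =>
        (∏ i, |u i| ^ (δ i + if i = k then 1 else 0)) *
          ((1 + ∑ k, |u k|) ^ m * ‖M u‖)) volume := by
      intro k
      apply ih
      have : (∑ i, (δ i + if i = k then 1 else 0)) = (∑ i, δ i) + 1 := by
        rw [Finset.sum_add_distrib]
        simp
      omega
    have base := ih δ (by omega)
    apply Integrable.congr (base.add (integrable_finset_sum Finset.univ fun k _ => key k))
    filter_upwards with u
    show _ + _ = (∏ i, |u i| ^ δ i) * ((1 + ∑ k, |u k|) ^ (m+1) * ‖M u‖)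
    simp only [Pi.add_apply, hprod u]
    rw [← Finset.sum_mul, ← Finset.mul_sum]
    ring

lemma continuous_appE {n : ℕ} (N : Matrix (Fin n) (Fin n) ℝ) : Continuous (appE N) := by
  let L : Euc n →ₗ[ℝ] Euc n :=
    { toFun := appE N
      map_add' := fun x y => by simp only [appE, WithLp.ofLp_add, Matrix.mulVec_add, WithLp.toLp_add]
      map_smul' := fun c x => by simp only [appE, WithLp.ofLp_smul, Matrix.mulVec_smul, WithLp.toLp_smul, RingHom.id_apply] }
  exact L.continuous_of_finiteDimensional

lemma isOpenMap_appE {n : ℕ} (N : Matrix (Fin n) (Fin n) ℝ) (h : IsUnit N.det) :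
    IsOpenMap (appE N) := by
  let L : Euc n ≃ₗ[ℝ] Euc n :=
    { toFun := appE N
      invFun := appE N⁻¹
      map_add' := fun x y => by simp only [appE, WithLp.ofLp_add, Matrix.mulVec_add, WithLp.toLp_add]
      map_smul' := fun c x => by simp only [appE, WithLp.ofLp_smul, Matrix.mulVec_smul, WithLp.toLp_smul, RingHom.id_apply]
      left_inv := fun x => by
        show WithLp.toLp 2 (N⁻¹.mulVec (N.mulVec x)) = x
        rw [Matrix.mulVec_mulVec, Matrix.nonsing_inv_mul _ h, Matrix.one_mulVec]
      right_inv := fun x => by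
        show WithLp.toLp 2 (N.mulVec (N⁻¹.mulVec x)) = x
        rw [Matrix.mulVec_mulVec, Matrix.mul_nonsing_inv _ h, Matrix.one_mulVec] }
  have : IsOpenMap (L.toContinuousLinearEquiv) := L.toContinuousLinearEquiv.toHomeomorph.isOpenMap
  exact this

lemma poly_bound {n s : ℕ} (c : (Fin n → ℕ) → ℂ) (Cm S : ℝ) (hCm : 1 ≤ Cm) (hS : 0 ≤ S)
    (x : Euc n) (hx : ∀ i, |x i| ≤ Cm * (1 + S)) :
    ‖∑ γ ∈ mIdx n s, c γ * ∏ i, (x i : ℂ) ^ γ i‖ ≤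
      (∑ γ ∈ mIdx n s, ‖c γ‖) * (Cm ^ s * (1 + S) ^ s) := by
  have hbase : (1:ℝ) ≤ Cm * (1 + S) := by nlinarith
  refine (norm_sum_le _ _).trans ?_
  rw [Finset.sum_mul]
  refine Finset.sum_le_sum fun γ hγ => ?_
  rw [norm_mul]
  have hγs : (∑ i, γ i) ≤ s := (Finset.mem_filter.mp hγ).2
  have hnp : ‖∏ i, (x i : ℂ) ^ γ i‖ = ∏ i, |x i| ^ γ i := by
    rw [norm_prod]
    refine Finset.prod_congr rfl fun i _ => ?_
    rw [norm_pow, Complex.norm_real, Real.norm_eq_abs]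
  rw [hnp, ← mul_pow]
  refine mul_le_mul_of_nonneg_left ?_ (norm_nonneg _)
  calc ∏ i, |x i| ^ γ i ≤ ∏ i, (Cm * (1+S)) ^ γ i :=
        Finset.prod_le_prod (fun i _ => by positivity)
          (fun i _ => pow_le_pow_left₀ (abs_nonneg _) (hx i) _)
    _ = (Cm * (1+S)) ^ (∑ i, γ i) := Finset.prod_pow_eq_pow_sum _ _ _
    _ ≤ (Cm * (1+S)) ^ s := pow_le_pow_right₀ hbase hγs

lemma tendsto_coeff {n s : ℕ} {A : Matrix (Fin n) (Fin n) ℝ} {b : ℝ}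
    (hA : IsExpansive A) (hdet : IsUnit A.det) (E : EllipsoidFamily n A b)
    (measB : ∀ j : ℤ, MeasurableSet (E.B j))
    (M : Euc n → ℂ) (hMint : Integrable M volume)
    (hM0 : ∫ u, M u = 0)
    (hMia : ∀ δ : Fin n → ℕ, (∑ i, δ i) ≤ s →
      Integrable (fun u : Euc n => (∏ i, ((u i : ℂ) ^ δ i)) * M u) volume)
    (c : (Fin n → ℕ) → ℂ) (Qb : Euc n → ℂ)
    (hQb : ∀ x : Euc n, Qb x = ∑ γ ∈ mIdx n s, c γ * ∏ i, (x i : ℂ) ^ γ i) :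
    Tendsto (fun j : ℤ => ∫ u in E.B j, M u * (starRingEnd ℂ) (Qb (appE (A ^ (-j)) u)))
      atTop (𝓝 0) := by
  classical
  obtain ⟨g, hg0, hgt, hgb⟩ := expansive_decay A hA
  obtain ⟨C0, hC0⟩ := hgt.bddAbove_range
  have hC0' : ∀ m, g m ≤ C0 := fun m => hC0 ⟨m, rfl⟩
  set Cm : ℝ := max C0 1 with hCmdef
  have hCm1 : (1:ℝ) ≤ Cm := le_max_right _ _
  have hgC : ∀ m, g m ≤ Cm := fun m => (hC0' m).trans (le_max_left _ _)
  -- continuity of Qb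
  have hQbc : Continuous Qb := by
    rw [show Qb = fun x => ∑ γ ∈ mIdx n s, c γ * ∏ i, (x i : ℂ) ^ γ i from funext hQb]
    refine continuous_finset_sum _ fun γ _ => Continuous.mul continuous_const ?_
    exact continuous_finset_prod _ fun i _ =>
      (Complex.continuous_ofReal.comp ((continuous_apply i).comp (PiLp.continuous_ofLp _ _))).pow _
  -- matrix zpow identification
  have hAj : ∀ j : ℤ, 0 ≤ j → A ^ (-j) = A⁻¹ ^ j.toNat := by
    intro j hj
    have h1 : -j = -(j.toNat : ℤ) := by omega
    rw [h1, Matrix.zpow_neg_natCast, ← Matrix.inv_pow']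
  set CQ : ℝ := ∑ γ ∈ mIdx n s, ‖c γ‖ with hCQdef
  have hCQ0 : 0 ≤ CQ := Finset.sum_nonneg fun γ _ => norm_nonneg _
  set bound : Euc n → ℝ :=
    fun u => CQ * (Cm ^ s * ((1 + ∑ k, |u k|) ^ s * ‖M u‖)) with hbounddef
  have hbound_int : Integrable bound volume := by
    have h0 := mol_integrable_aux M hMia s (fun _ => 0) (by simp)
    simp only [pow_zero, Finset.prod_const_one, one_mul] at h0
    exact (h0.const_mul _).const_mul _
  -- the indicator family
  set F : ℤ → Euc n → ℂ := fun j u =>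
    (E.B j).indicator (fun u => M u * (starRingEnd ℂ) (Qb (appE (A ^ (-j)) u))) u with hFdef
  have key : Tendsto (fun j : ℤ => ∫ u, F j u) atTop
      (𝓝 (∫ u, M u * (starRingEnd ℂ) (Qb 0))) := by
    apply tendsto_integral_filter_of_dominated_convergence bound
    · -- measurability
      filter_upwards with j
      exact (hMint.aestronglyMeasurable.mul
        ((Complex.continuous_conj.comp (hQbc.comp (continuous_appE _))).aestronglyMeasurable)).indicator
        (measB j)
    · -- bound
      filter_upwards [eventually_ge_atTop (0:ℤ)] with j hj
      filter_upwards with u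
      have hnorm : ‖F j u‖ ≤ ‖M u * (starRingEnd ℂ) (Qb (appE (A ^ (-j)) u))‖ :=
        norm_indicator_le_norm_self _ _
      refine hnorm.trans ?_
      rw [norm_mul, RCLike.norm_conj]
      set x : Euc n := appE (A ^ (-j)) u with hxdef
      set S : ℝ := ∑ k, |u k| with hSdef
      have hS0 : 0 ≤ S := Finset.sum_nonneg fun k _ => abs_nonneg _
      have hx : ∀ i, |x i| ≤ Cm * (1 + S) := by
        intro i
        have : x i = ∑ k, (A ^ (-j)) i k * u k := by simp [x, appE, Matrix.mulVec, dotProduct]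
        rw [this]
        calc |∑ k, (A ^ (-j)) i k * u k| ≤ ∑ k, |(A ^ (-j)) i k * u k| :=
              Finset.abs_sum_le_sum_abs _ _
          _ ≤ ∑ k, Cm * |u k| := by
              refine Finset.sum_le_sum fun k _ => ?_
              rw [abs_mul]
              refine mul_le_mul_of_nonneg_right ?_ (abs_nonneg _)
              rw [hAj j hj]
              exact (hgb _ i k).trans (hgC _)
          _ = Cm * S := by rw [← Finset.mul_sum]
          _ ≤ Cm * (1 + S) := by nlinarith
      have hq : ‖Qb x‖ ≤ CQ * (Cm ^ s * (1 + S) ^ s) := by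
        rw [hQb x]
        exact poly_bound (s := s) c Cm S hCm1 hS0 x hx
      calc ‖M u‖ * ‖Qb x‖
          ≤ ‖M u‖ * (CQ * (Cm ^ s * (1 + S) ^ s)) :=
            mul_le_mul_of_nonneg_left hq (norm_nonneg _)
        _ = bound u := by simp only [hbounddef]; ring
    · exact hbound_int
    · -- pointwise limit
      filter_upwards with u
      have hmono : Monotone E.B := monotone_int_of_le_succ fun j => E.mono j
      obtain ⟨j₀, hj₀⟩ : ∃ j₀ : ℤ, u ∈ E.B j₀ := by
        have : u ∈ ⋃ j : ℤ, E.B j := by rw [E.iUnion_eq]; trivial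
        exact mem_iUnion.mp this
      have hev : (fun j : ℤ => F j u) =ᶠ[atTop]
          (fun j : ℤ => M u * (starRingEnd ℂ) (Qb (appE (A ^ (-j)) u))) := by
        filter_upwards [eventually_ge_atTop j₀] with j hj
        exact indicator_of_mem (hmono hj hj₀) _
      rw [show (𝓝 (M u * (starRingEnd ℂ) (Qb 0)))
          = 𝓝 (M u * (starRingEnd ℂ) (Qb (0 : Euc n))) from rfl]
      refine Tendsto.congr' hev.symm ?_
      have hx0 : Tendsto (fun j : ℤ => appE (A ^ (-j)) u) atTop (𝓝 (0 : Euc n)) := by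
        set S : ℝ := ∑ k, |u k| with hSdef
        have hS0 : 0 ≤ S := Finset.sum_nonneg fun k _ => abs_nonneg _
        have htn : Tendsto Int.toNat atTop atTop :=
          tendsto_atTop_atTop.mpr fun m => ⟨(m : ℤ), fun a ha => by omega⟩
        have ha : Tendsto (fun j : ℤ => Real.sqrt n * (g j.toNat * S)) atTop (𝓝 0) := by
          have : Tendsto (fun j : ℤ => g j.toNat) atTop (𝓝 0) := hgt.comp htn
          have h2 := (this.mul_const S).const_mul (Real.sqrt n)
          simpa using h2
        apply squeeze_zero_norm' _ ha
        filter_upwards [eventually_ge_atTop (0:ℤ)] with j hj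
        set x : Euc n := appE (A ^ (-j)) u with hxdef
        have hxb : ∀ i, |x i| ≤ g j.toNat * S := by
          intro i
          have : x i = ∑ k, (A ^ (-j)) i k * u k := by simp [x, appE, Matrix.mulVec, dotProduct]
          rw [this]
          calc |∑ k, (A ^ (-j)) i k * u k| ≤ ∑ k, |(A ^ (-j)) i k * u k| :=
                Finset.abs_sum_le_sum_abs _ _
            _ ≤ ∑ k, g j.toNat * |u k| := by
                refine Finset.sum_le_sum fun k _ => ?_
                rw [abs_mul]
                refine mul_le_mul_of_nonneg_right ?_ (abs_nonneg _)
                rw [hAj j hj]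
                exact hgb _ i k
            _ = g j.toNat * S := by rw [← Finset.mul_sum]
        have hgS0 : 0 ≤ g j.toNat * S := mul_nonneg (hg0 _) hS0
        have : ‖x‖ ≤ Real.sqrt n * (g j.toNat * S) := by
          rw [EuclideanSpace.norm_eq]
          have hsum : (∑ i, ‖x i‖ ^ 2) ≤ (n : ℝ) * (g j.toNat * S) ^ 2 := by
            calc (∑ i, ‖x i‖ ^ 2) ≤ ∑ _i : Fin n, (g j.toNat * S) ^ 2 := by
                  refine Finset.sum_le_sum fun i _ => ?_
                  rw [Real.norm_eq_abs]
                  exact pow_le_pow_left₀ (abs_nonneg _) (hxb i) 2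
              _ = (n : ℝ) * (g j.toNat * S) ^ 2 := by
                  rw [Finset.sum_const, Finset.card_univ, Fintype.card_fin, nsmul_eq_mul]
          calc Real.sqrt (∑ i, ‖x i‖ ^ 2) ≤ Real.sqrt ((n : ℝ) * (g j.toNat * S) ^ 2) :=
                Real.sqrt_le_sqrt hsum
            _ = Real.sqrt n * (g j.toNat * S) := by
                rw [Real.sqrt_mul (by positivity), Real.sqrt_sq hgS0]
        exact this
      have hc : Continuous (fun y : Euc n => M u * (starRingEnd ℂ) (Qb y)) :=
        continuous_const.mul (Complex.continuous_conj.comp hQbc)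
      exact (hc.continuousAt.tendsto).comp hx0
  have hzero : (∫ u, M u * (starRingEnd ℂ) (Qb 0)) = 0 := by
    rw [integral_mul_const, hM0, zero_mul]
  rw [hzero] at key
  have heq : ∀ j : ℤ, (∫ u, F j u)
      = ∫ u in E.B j, M u * (starRingEnd ℂ) (Qb (appE (A ^ (-j)) u)) := by
    intro j
    rw [hFdef]
    exact integral_indicator (measB j)
  exact key.congr heq

/-- for a `(p,q,s,d)`-molecule `M` centered at `0`, the `L¹(Bⱼ)`
norms of the projections `π_j M` onto polynomials of degree at most `s` tend to `0`
as `j → ∞`. -/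
theorem statement12 {n : ℕ} (A : Matrix (Fin n) (Fin n) ℝ) (b lm lp : ℝ)
    (hA : IsExpansive A) (hb : b = |A.det|) (hlm : 1 < lm)
    (heig : ∀ z ∈ spectrum ℂ (A.map Complex.ofReal),
      lm < ‖z‖ ∧ ‖z‖ < lp)
    (E : EllipsoidFamily n A b) (ρ : Euc n → ℝ)
    (hρ0 : ρ 0 = 0)
    (hρ : ∀ j : ℤ, ∀ x ∈ E.B (j + 1) \ E.B j, ρ x = b ^ j)
    -- admissible quadruple (p, q, s, d) and θ
    (p : ℝ) (q : ℝ≥0∞) (s : ℕ) (d θ : ℝ)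
    (hp0 : 0 < p) (hp1 : p ≤ 1) (hq1 : 1 ≤ q) (hpq : ENNReal.ofReal p < q)
    (hs : ⌊(1 / p - 1) * Real.log b / Real.log lm⌋ ≤ (s : ℤ))
    (hd : d > (s : ℝ) * (Real.log lp / Real.log b) + 1 - (q⁻¹).toReal)
    (hθ : θ = (1 / p - (q⁻¹).toReal) / d)
    -- an orthonormal basis of the polynomials of degree at most `s` in `L²(B₀)`
    (Q : (Fin n → ℕ) → Euc n → ℂ)
    (hQpoly : ∀ β ∈ mIdx n s, ∃ c : (Fin n → ℕ) → ℂ, ∀ x : Euc n,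
      Q β x = ∑ γ ∈ mIdx n s, c γ * ∏ i, (x i : ℂ) ^ γ i)
    (hQorth : ∀ β ∈ mIdx n s, ∀ γ ∈ mIdx n s,
      ∫ x in E.B 0, Q β x * (starRingEnd ℂ) (Q γ x) = if β = γ then 1 else 0)
    (hQspan : ∀ γ ∈ mIdx n s, ∃ c : (Fin n → ℕ) → ℂ, ∀ x : Euc n,
      (∏ i, (x i : ℂ) ^ γ i) = ∑ β ∈ mIdx n s, c β * Q β x)
    -- a `(p,q,s,d)`-molecule centered at `0`
    (M : Euc n → ℂ) (hMint : Integrable M volume)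
    (hMnorm : molNorm q θ d ρ 0 M ≠ ⊤)
    (hMmom : ∀ β : Fin n → ℕ, (∑ i, β i) ≤ s →
      Integrable (fun x : Euc n => (∏ i, ((x i : ℂ) ^ β i)) * M x) volume ∧
      ∫ x : Euc n, (∏ i, ((x i : ℂ) ^ β i)) * M x = 0) :
    Tendsto (fun j : ℤ => ∫ x in E.B j, ‖projQ s A b E.B Q M j x‖) atTop (𝓝 0) := by
  classical
  have hdet : IsUnit A.det := expansive_isUnit_det A hA
  have hdet0 : A.det ≠ 0 := by simpa [isUnit_iff_ne_zero] using hdet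
  have hb0 : 0 < b := by rw [hb]; exact abs_pos.mpr hdet0
  -- measurability and openness of the B j
  obtain ⟨T, hT⟩ := E.ell
  have openB0 : IsOpen (E.B 0) := by
    rw [hT]
    exact T.toHomeomorph.isOpenMap _ isOpen_ball
  have openB : ∀ j : ℤ, IsOpen (E.B j) := by
    intro j
    rw [E.dil j]
    exact isOpenMap_appE _ (hdet.det_zpow j) _ openB0
  have measB : ∀ j : ℤ, MeasurableSet (E.B j) := fun j => (openB j).measurableSet
  have volBne : ∀ j : ℤ, volume (E.B j) ≠ ⊤ := by
    intro j; rw [E.vol]; exact ENNReal.ofReal_ne_top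
  have volBtoReal : ∀ j : ℤ, (volume (E.B j)).toReal = b ^ j := by
    intro j; rw [E.vol]; exact ENNReal.toReal_ofReal (le_of_lt (zpow_pos hb0 j))
  -- boundedness of B 0
  have boundedB0 : Bornology.IsBounded (E.B 0) := by
    rw [hT]
    exact ((T : Euc n →L[ℝ] Euc n).lipschitz).isBounded_image isBounded_ball
  -- continuity of the Q β
  have hQcont : ∀ β ∈ mIdx n s, Continuous (Q β) := by
    intro β hβ
    obtain ⟨c, hc⟩ := hQpoly β hβ
    rw [show Q β = fun x => ∑ γ ∈ mIdx n s, c γ * ∏ i, (x i : ℂ) ^ γ i from funext hc]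
    refine continuous_finset_sum _ fun γ _ => Continuous.mul continuous_const ?_
    exact continuous_finset_prod _ fun i _ =>
      (Complex.continuous_ofReal.comp ((continuous_apply i).comp (PiLp.continuous_ofLp _ _))).pow _
  -- sup bounds for Q β on B 0
  have hQC : ∀ β ∈ mIdx n s, ∃ C : ℝ, 0 ≤ C ∧ ∀ x ∈ E.B 0, ‖Q β x‖ ≤ C := by
    intro β hβ
    have hcomp : IsCompact (closure (E.B 0)) :=
      Metric.isCompact_of_isClosed_isBounded isClosed_closure boundedB0.closure
    obtain ⟨C, hC⟩ := hcomp.exists_bound_of_continuousOn (hQcont β hβ).continuousOn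
    exact ⟨max C 0, le_max_right _ _,
      fun x hx => (hC x (subset_closure hx)).trans (le_max_left _ _)⟩
  choose! CB hCB0 hCB using hQC
  -- moment facts
  have hMia : ∀ δ : Fin n → ℕ, (∑ i, δ i) ≤ s →
      Integrable (fun u : Euc n => (∏ i, ((u i : ℂ) ^ δ i)) * M u) volume :=
    fun δ hδ => (hMmom δ hδ).1
  have hM00 : ∫ u, M u = 0 := by
    have h := (hMmom (fun _ => 0) (by simp)).2
    simpa using h
  -- the coefficient integrals
  set I : (Fin n → ℕ) → ℤ → ℂ := fun β j =>
    ∫ u in E.B j, M u * (starRingEnd ℂ) (Q β (appE (A ^ (-j)) u)) with hIdef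
  have hIb : ∀ β ∈ mIdx n s, Tendsto (fun j : ℤ => I β j) atTop (𝓝 0) := by
    intro β hβ
    obtain ⟨c, hc⟩ := hQpoly β hβ
    exact tendsto_coeff hA hdet E measB M hMint hM00 hMia c (Q β) hc
  -- membership transfer
  have hmem : ∀ (j : ℤ) (x : Euc n), x ∈ E.B j → appE (A ^ (-j)) x ∈ E.B 0 := by
    intro j x hx
    rw [E.dil j] at hx
    obtain ⟨y, hy, rfl⟩ := hx
    have : appE (A ^ (-j)) (appE (A ^ j) y) = y := by
      show WithLp.toLp 2 ((A ^ (-j)).mulVec ((A ^ j).mulVec y)) = y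
      rw [Matrix.mulVec_mulVec, Matrix.zpow_neg_mul_zpow_self j hdet, Matrix.one_mulVec]
    rw [this]
    exact hy
  -- continuity of projQ in x
  have hPcont : ∀ j : ℤ, Continuous (fun x => projQ s A b E.B Q M j x) := by
    intro j
    refine continuous_finset_sum _ fun β hβ => Continuous.mul continuous_const ?_
    exact (hQcont β hβ).comp (continuous_appE _)
  -- the dominating sequence
  set G : ℤ → ℝ := fun j => ∑ β ∈ mIdx n s, CB β * ‖I β j‖ with hGdef
  have hGt : Tendsto G atTop (𝓝 0) := by
    rw [show (0:ℝ) = ∑ β ∈ mIdx n s, 0 by simp]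
    refine tendsto_finset_sum _ fun β hβ => ?_
    have h1 : Tendsto (fun j : ℤ => ‖I β j‖) atTop (𝓝 0) := by
      have := (hIb β hβ).norm
      simpa using this
    simpa using h1.const_mul (CB β)
  -- main bound
  have hFG : ∀ j : ℤ, (∫ x in E.B j, ‖projQ s A b E.B Q M j x‖) ≤ G j := by
    intro j
    set D : ℝ := ∑ β ∈ mIdx n s, (b ^ (-j) * ‖I β j‖) * CB β with hDdef
    have hpoint : ∀ x ∈ E.B j, ‖projQ s A b E.B Q M j x‖ ≤ D := by
      intro x hx
      rw [projQ]
      refine (norm_sum_le _ _).trans ?_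
      rw [hDdef]
      refine Finset.sum_le_sum fun β hβ => ?_
      rw [norm_mul, norm_mul, Complex.norm_real, Real.norm_eq_abs,
        abs_of_pos (zpow_pos hb0 _)]
      exact mul_le_mul_of_nonneg_left (hCB β hβ _ (hmem j x hx))
        (by positivity)
    have hD0 : 0 ≤ D := by
      rw [hDdef]
      exact Finset.sum_nonneg fun β hβ => mul_nonneg
        (mul_nonneg (le_of_lt (zpow_pos hb0 _)) (norm_nonneg _)) (hCB0 β hβ)
    have hIntOn : IntegrableOn (fun x => ‖projQ s A b E.B Q M j x‖) (E.B j) volume := by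
      refine Measure.integrableOn_of_bounded (M := D) (volBne j)
        ((hPcont j).norm.aestronglyMeasurable) ?_
      refine ae_restrict_of_forall_mem (measB j) fun x hx => ?_
      rw [norm_norm]
      exact hpoint x hx
    calc (∫ x in E.B j, ‖projQ s A b E.B Q M j x‖)
        ≤ ∫ _x in E.B j, D := by
          refine setIntegral_mono_on hIntOn ?_ (measB j) hpoint
          exact integrableOn_const (volBne j)
      _ = (volume (E.B j)).toReal • D := setIntegral_const D
      _ = b ^ j * D := by rw [volBtoReal j, smul_eq_mul]
      _ = G j := by
          rw [hDdef, hGdef, Finset.mul_sum]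
          refine Finset.sum_congr rfl fun β hβ => ?_
          have hbj : b ^ j * b ^ (-j) = 1 := by
            rw [← zpow_add₀ (ne_of_gt hb0)]
            simp
          calc b ^ j * (b ^ (-j) * ‖I β j‖ * CB β)
              = (b ^ j * b ^ (-j)) * (‖I β j‖ * CB β) := by ring
            _ = CB β * ‖I β j‖ := by rw [hbj]; ring
    
  have hF0 : ∀ j : ℤ, 0 ≤ ∫ x in E.B j, ‖projQ s A b E.B Q M j x‖ :=
    fun j => integral_nonneg fun x => norm_nonneg _
  exact squeeze_zero hF0 hFG hGt
end
end

section
/- Let M be a (p,q,s,d)-molecule centered at 0, and for j ∈ ℤ let π_j M(x) = Σ_{|α|≤s} ( b^{−j} ∫_{Bⱼ} M(u) · conj(Q_α(A^{−j} u)) du ) · Q_α(A^{−j} x) and g_j = (M − π_j M)·1_{Bⱼ}. Then g_j → M in L¹(ℝⁿ) as j → ∞. -/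
open MeasureTheory Filter Set Metric
open scoped ENNReal NNReal Topology RealInnerProductSpace BigOperators Pointwise

noncomputable section

-- Auxiliary lemmas ----------------------------------------------------------

noncomputable def appLin {n : ℕ} (A : Matrix (Fin n) (Fin n) ℝ) : Euc n →ₗ[ℝ] Euc n where
  toFun := appE A
  map_add' x y := by simp [appE, Matrix.mulVec_add]
  map_smul' c x := by simp [appE, Matrix.mulVec_smul]

lemma contAppE {n : ℕ} (A : Matrix (Fin n) (Fin n) ℝ) : Continuous (appE A) :=
  (appLin A).continuous_of_finiteDimensional

lemma appE_smul {n : ℕ} (A : Matrix (Fin n) (Fin n) ℝ) (c : ℝ) (x : Euc n) :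
    appE A (c • x) = c • appE A x := by simp [appE, Matrix.mulVec_smul]

lemma appE_comp {n : ℕ} {A : Matrix (Fin n) (Fin n) ℝ} (h : IsUnit A.det) (i k : ℤ)
    (x : Euc n) : appE (A ^ i) (appE (A ^ k) x) = appE (A ^ (i + k)) x := by
  show WithLp.toLp 2 ((A ^ i).mulVec ((A ^ k).mulVec x)) = _
  rw [Matrix.mulVec_mulVec, ← Matrix.zpow_add h]; rfl

lemma appE_zero_pow {n : ℕ} (A : Matrix (Fin n) (Fin n) ℝ) (x : Euc n) :
    appE (A ^ (0 : ℤ)) x = x := by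
  show WithLp.toLp 2 ((A ^ (0 : ℤ)).mulVec x) = x
  rw [zpow_zero, Matrix.one_mulVec]

/-- for a `(p,q,s,d)`-molecule `M` centered at `0`, the truncations
`g_j = (M − π_j M)·1_{Bⱼ}` converge to `M` in `L¹(ℝⁿ)` as `j → ∞`. -/
theorem statement13 {n : ℕ} (A : Matrix (Fin n) (Fin n) ℝ) (b lm lp : ℝ)
    (hA : IsExpansive A) (hb : b = |A.det|) (hlm : 1 < lm)
    (heig : ∀ z ∈ spectrum ℂ (A.map Complex.ofReal),
      lm < ‖z‖ ∧ ‖z‖ < lp)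
    (E : EllipsoidFamily n A b) (ρ : Euc n → ℝ)
    (hρ0 : ρ 0 = 0)
    (hρ : ∀ j : ℤ, ∀ x ∈ E.B (j + 1) \ E.B j, ρ x = b ^ j)
    -- admissible quadruple (p, q, s, d) and θ
    (p : ℝ) (q : ℝ≥0∞) (s : ℕ) (d θ : ℝ)
    (hp0 : 0 < p) (hp1 : p ≤ 1) (hq1 : 1 ≤ q) (hpq : ENNReal.ofReal p < q)
    (hs : ⌊(1 / p - 1) * Real.log b / Real.log lm⌋ ≤ (s : ℤ))
    (hd : d > (s : ℝ) * (Real.log lp / Real.log b) + 1 - (q⁻¹).toReal)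
    (hθ : θ = (1 / p - (q⁻¹).toReal) / d)
    -- an orthonormal basis of the polynomials of degree at most `s` in `L²(B₀)`
    (Q : (Fin n → ℕ) → Euc n → ℂ)
    (hQpoly : ∀ β ∈ mIdx n s, ∃ c : (Fin n → ℕ) → ℂ, ∀ x : Euc n,
      Q β x = ∑ γ ∈ mIdx n s, c γ * ∏ i, (x i : ℂ) ^ γ i)
    (hQorth : ∀ β ∈ mIdx n s, ∀ γ ∈ mIdx n s,
      ∫ x in E.B 0, Q β x * (starRingEnd ℂ) (Q γ x) = if β = γ then 1 else 0)
    (hQspan : ∀ γ ∈ mIdx n s, ∃ c : (Fin n → ℕ) → ℂ, ∀ x : Euc n,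
      (∏ i, (x i : ℂ) ^ γ i) = ∑ β ∈ mIdx n s, c β * Q β x)
    -- a `(p,q,s,d)`-molecule centered at `0`
    (M : Euc n → ℂ) (hMint : Integrable M volume)
    (hMnorm : molNorm q θ d ρ 0 M ≠ ⊤)
    (hMmom : ∀ β : Fin n → ℕ, (∑ i, β i) ≤ s →
      Integrable (fun x : Euc n => (∏ i, ((x i : ℂ) ^ β i)) * M x) volume ∧
      ∫ x : Euc n, (∏ i, ((x i : ℂ) ^ β i)) * M x = 0) :
    Tendsto (fun j : ℤ =>
        ∫ x : Euc n,
          ‖Set.indicator (E.B j) (fun y => M y - projQ s A b E.B Q M j y) x - M x‖)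
      atTop (𝓝 0) := by
  -- basic positivity facts about b and invertibility of A
  obtain ⟨T, hT⟩ := E.ell
  have hb1 : (1 : ℝ) ≤ b := by
    have h := measure_mono (μ := volume) (E.mono 0)
    rw [E.vol 0, E.vol (0 + 1)] at h
    simp only [zpow_zero, zero_add, zpow_one, ENNReal.ofReal_one] at h
    exact ENNReal.one_le_ofReal.1 h
  have hbpos : (0 : ℝ) < b := lt_of_lt_of_le one_pos hb1
  have hbne : b ≠ 0 := ne_of_gt hbpos
  have hdet : IsUnit A.det := by
    refine isUnit_iff_ne_zero.2 fun h => ?_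
    rw [hb, h] at hbpos; simp at hbpos
  have monoB : Monotone E.B := monotone_int_of_le_succ E.mono
  -- membership translations
  have hmemB : ∀ (j : ℤ) (x : Euc n), x ∈ E.B j ↔ appE (A ^ (-j)) x ∈ E.B 0 := by
    intro j x
    rw [E.dil j]
    constructor
    · rintro ⟨y, hy, rfl⟩
      rwa [appE_comp hdet, neg_add_cancel, appE_zero_pow]
    · intro h
      exact ⟨_, h, by rw [appE_comp hdet, add_neg_cancel, appE_zero_pow]⟩
  have hImgB : ∀ j : ℤ, appE (A ^ (-j)) '' E.B j = E.B 0 := by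
    intro j
    ext y
    constructor
    · rintro ⟨x, hx, rfl⟩; exact (hmemB j x).1 hx
    · intro hy
      refine ⟨appE (A ^ j) y, ?_, ?_⟩
      · rw [E.dil j]; exact Set.mem_image_of_mem _ hy
      · rw [appE_comp hdet, neg_add_cancel, appE_zero_pow]
  have hmapB : ∀ (j k : ℤ) (x : Euc n), x ∈ E.B k → appE (A ^ (-j)) x ∈ E.B (k - j) := by
    intro j k x hx
    rw [hmemB]
    rw [appE_comp hdet]
    have : -(k - j) + -j = -k := by ring
    rw [this]
    exact (hmemB k x).1 hx
  -- openness, measurability, volume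
  have hopenB : ∀ j : ℤ, IsOpen (E.B j) := by
    intro j
    have hB0 : IsOpen (E.B 0) := by
      rw [hT]
      exact T.toHomeomorph.isOpenMap _ isOpen_ball
    have : E.B j = appE (A ^ (-j)) ⁻¹' E.B 0 := Set.ext fun x => hmemB j x
    rw [this]
    exact hB0.preimage (contAppE _)
  have hmeasB : ∀ j : ℤ, MeasurableSet (E.B j) := fun j => (hopenB j).measurableSet
  have hvolBfin : ∀ j : ℤ, volume (E.B j) ≠ ⊤ := fun j => by
    rw [E.vol]; exact ENNReal.ofReal_ne_top
  have hvolBr : ∀ j : ℤ, (volume (E.B j)).toReal = b ^ j := fun j => by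
    rw [E.vol]; exact ENNReal.toReal_ofReal (zpow_nonneg hbpos.le j)
  -- boundedness of the ellipsoids
  have hBdd : ∀ j : ℤ, Bornology.IsBounded (E.B j) := by
    intro j
    rw [E.dil j, hT, ← Set.image_comp]
    have : Continuous (appE (A ^ j) ∘ T) := (contAppE _).comp T.continuous
    have hl : appE (A ^ j) ∘ ⇑T = ⇑((appLin (A ^ j)).toContinuousLinearMap.comp
        (T : Euc n →L[ℝ] Euc n)) := rfl
    rw [hl]
    exact (ContinuousLinearMap.lipschitz _).isBounded_image isBounded_ball
  -- every point eventually in B j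
  have hmemEv : ∀ u : Euc n, ∀ᶠ j : ℤ in atTop, u ∈ E.B j := by
    intro u
    have hu : u ∈ ⋃ j : ℤ, E.B j := by rw [E.iUnion_eq]; trivial
    obtain ⟨k, hk⟩ := Set.mem_iUnion.1 hu
    exact eventually_atTop.2 ⟨k, fun j hj => monoB hj hk⟩
  -- closure of B 0 shrunk by 1/2 lands back in B 0
  have hclB0 : closure (E.B 0) ⊆ ⇑T '' Metric.closedBall 0 1 := by
    refine closure_minimal ?_ (((isCompact_closedBall (0 : Euc n) 1).image T.continuous).isClosed)
    rw [hT]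
    exact Set.image_mono ball_subset_closedBall
  have hhalf : ∀ y ∈ closure (E.B 0), (2⁻¹ : ℝ) • y ∈ E.B 0 := by
    intro y hy
    obtain ⟨z, hz, rfl⟩ := hclB0 hy
    rw [hT]
    refine ⟨(2⁻¹ : ℝ) • z, ?_, map_smul T _ _⟩
    rw [mem_ball_zero_iff, norm_smul]
    rw [mem_closedBall_zero_iff] at hz
    have : ‖(2⁻¹ : ℝ)‖ = 2⁻¹ := by norm_num
    rw [this]
    nlinarith [norm_nonneg z]
  -- the intersection of the closures is {0}
  have hIntCl : (⋂ m : ℤ, closure (E.B (-m))) ⊆ {(0 : Euc n)} := by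
    intro x hx
    have hhalfmem : ∀ j : ℤ, (2⁻¹ : ℝ) • x ∈ E.B j := by
      intro j
      have hx1 : x ∈ closure (E.B j) := by
        have := Set.mem_iInter.1 hx (-j)
        rwa [neg_neg] at this
      have hx2 : appE (A ^ (-j)) x ∈ closure (E.B 0) := by
        have himg := image_closure_subset_closure_image (s := E.B j) (contAppE (A ^ (-j)))
        have := himg ⟨x, hx1, rfl⟩
        rwa [hImgB j] at this
      have hx3 := hhalf _ hx2
      have hx4 : appE (A ^ j) ((2⁻¹ : ℝ) • appE (A ^ (-j)) x) ∈ E.B j := by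
        rw [E.dil j]; exact Set.mem_image_of_mem _ hx3
      rwa [appE_smul, appE_comp hdet, add_neg_cancel, appE_zero_pow] at hx4
    have : (2⁻¹ : ℝ) • x ∈ ⋂ j : ℤ, E.B j := Set.mem_iInter.2 hhalfmem
    rw [E.iInter_eq] at this
    have h0 : (2⁻¹ : ℝ) • x = 0 := this
    have := smul_eq_zero.1 h0
    simp only [Set.mem_singleton_iff]
    rcases this with h | h
    · norm_num at h
    · exact h
  -- small ellipsoids
  have hsmall : ∀ ε : ℝ, 0 < ε → ∃ m : ℤ, E.B m ⊆ ball (0 : Euc n) ε := by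
    intro ε hε
    have hdir : Directed (· ⊇ ·) (fun m : ℤ => closure (E.B (-m))) := by
      intro a b'
      exact ⟨max a b', closure_mono (monoB (by omega)), closure_mono (monoB (by omega))⟩
    obtain ⟨m, hm⟩ := exists_subset_nhds_of_isCompact' hdir
      (fun m => (hBdd (-m)).isCompact_closure) (fun m => isClosed_closure)
      (fun x hx => by
        have : x = 0 := hIntCl hx
        rw [this]
        exact ball_mem_nhds _ hε)
    exact ⟨-m, subset_closure.trans hm⟩
  -- pointwise convergence A^{-j} u → 0
  have htend0 : ∀ u : Euc n, Tendsto (fun j : ℤ => appE (A ^ (-j)) u) atTop (𝓝 0) := by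
    intro u
    rw [Metric.tendsto_nhds]
    intro ε hε
    obtain ⟨m, hm⟩ := hsmall ε hε
    have hu : u ∈ ⋃ j : ℤ, E.B j := by rw [E.iUnion_eq]; trivial
    obtain ⟨k, hk⟩ := Set.mem_iUnion.1 hu
    refine eventually_atTop.2 ⟨k - m, fun j hj => ?_⟩
    have h1 : appE (A ^ (-j)) u ∈ E.B (k - j) := hmapB j k u hk
    have h2 : appE (A ^ (-j)) u ∈ E.B m := monoB (by omega) h1
    have := hm h2
    rwa [mem_ball] at this
  -- continuity of the Q β
  have hQcont : ∀ β ∈ mIdx n s, Continuous (Q β) := by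
    intro β hβ
    obtain ⟨c, hc⟩ := hQpoly β hβ
    rw [show Q β = fun x => ∑ γ ∈ mIdx n s, c γ * ∏ i, (x i : ℂ) ^ γ i from funext hc]
    refine continuous_finset_sum _ fun γ _ => continuous_const.mul ?_
    exact continuous_finset_prod _ fun i _ =>
      (Complex.continuous_ofReal.comp (PiLp.continuous_apply 2 _ i)).pow _
  -- uniform bounds for Q β on B 0
  have h0mem : (0 : Euc n) ∈ E.B 0 := by
    have : (0 : Euc n) ∈ ⋂ j : ℤ, E.B j := by rw [E.iInter_eq]; rfl
    exact Set.mem_iInter.1 this 0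
  have hKex : ∀ β ∈ mIdx n s, ∃ Kβ : ℝ, 0 ≤ Kβ ∧ ∀ y ∈ E.B 0, ‖Q β y‖ ≤ Kβ := by
    intro β hβ
    obtain ⟨z, _, hzmax⟩ := ((hBdd 0).isCompact_closure).exists_isMaxOn
      ⟨0, subset_closure h0mem⟩ ((hQcont β hβ).norm.continuousOn)
    exact ⟨‖Q β z‖, norm_nonneg _, fun y hy => hzmax (subset_closure hy)⟩
  choose! K hK0 hK using hKex
  -- the total integral of M vanishes
  have hM0 : ∫ x : Euc n, M x = 0 := by
    have h := (hMmom 0 (by simp)).2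
    simpa using h
  -- the coefficients' integrals tend to 0
  have hIten : ∀ β ∈ mIdx n s,
      Tendsto (fun j : ℤ => ∫ u in E.B j,
        M u * (starRingEnd ℂ) (Q β (appE (A ^ (-j)) u))) atTop (𝓝 0) := by
    intro β hβ
    have hconjcont : Continuous fun z : ℂ => (starRingEnd ℂ) z := continuous_star
    have hlimint : ∫ u : Euc n, M u * (starRingEnd ℂ) (Q β 0) = 0 := by
      rw [integral_mul_const, hM0, zero_mul]
    have key : Tendsto (fun j : ℤ => ∫ u : Euc n,
        Set.indicator (E.B j) (fun u => M u * (starRingEnd ℂ) (Q β (appE (A ^ (-j)) u))) u)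
        atTop (𝓝 (∫ u : Euc n, M u * (starRingEnd ℂ) (Q β 0))) := by
      refine tendsto_integral_filter_of_dominated_convergence
        (bound := fun u => ‖M u‖ * K β) ?_ ?_ ?_ ?_
      · refine Eventually.of_forall fun j => ?_
        refine AEStronglyMeasurable.indicator ?_ (hmeasB j)
        exact hMint.1.mul
          ((hconjcont.comp ((hQcont β hβ).comp (contAppE _))).aestronglyMeasurable)
      · refine Eventually.of_forall fun j => Eventually.of_forall fun u => ?_
        by_cases hu : u ∈ E.B j
        · rw [Set.indicator_of_mem hu, norm_mul, RCLike.norm_conj]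
          exact mul_le_mul_of_nonneg_left (hK β hβ _ ((hmemB j u).1 hu)) (norm_nonneg _)
        · rw [Set.indicator_of_notMem hu]
          simp only [norm_zero]
          exact mul_nonneg (norm_nonneg _) (hK0 β hβ)
      · exact hMint.norm.mul_const _
      · refine Eventually.of_forall fun u => ?_
        have h1 : Tendsto (fun j : ℤ => M u * (starRingEnd ℂ) (Q β (appE (A ^ (-j)) u)))
            atTop (𝓝 (M u * (starRingEnd ℂ) (Q β 0))) :=
          tendsto_const_nhds.mul ((hconjcont.tendsto _).comp
            (((hQcont β hβ).tendsto 0).comp (htend0 u)))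
        refine h1.congr' ?_
        filter_upwards [hmemEv u] with j hj
        exact (Set.indicator_of_mem hj
          (fun u => M u * (starRingEnd ℂ) (Q β (appE (A ^ (-j)) u)))).symm
    rw [hlimint] at key
    refine key.congr fun j => ?_
    exact integral_indicator (hmeasB j)
  -- notation for coefficients
  set I : ℤ → (Fin n → ℕ) → ℂ := fun j β =>
    ∫ u in E.B j, M u * (starRingEnd ℂ) (Q β (appE (A ^ (-j)) u)) with hI
  set C : ℤ → ℝ := fun j => ∑ β ∈ mIdx n s, ‖I j β‖ * K β with hC
  have hCnonneg : ∀ j, 0 ≤ C j := fun j =>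
    Finset.sum_nonneg fun β hβ => mul_nonneg (norm_nonneg _) (hK0 β hβ)
  have hCtend : Tendsto C atTop (𝓝 0) := by
    have h := tendsto_finset_sum (mIdx n s)
      (fun β hβ => ((hIten β hβ).norm.mul_const (K β)))
    simpa using h
  -- continuity of projQ
  have hπcont : ∀ j : ℤ, Continuous fun x => projQ s A b E.B Q M j x := by
    intro j
    unfold projQ
    exact continuous_finset_sum _ fun β hβ =>
      continuous_const.mul ((hQcont β hβ).comp (contAppE _))
  -- bound for projQ on B j
  have hπbound : ∀ j : ℤ, ∀ x ∈ E.B j,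
      ‖projQ s A b E.B Q M j x‖ ≤ b ^ (-j : ℤ) * C j := by
    intro j x hx
    unfold projQ
    calc ‖∑ β ∈ mIdx n s, (((b ^ (-j) : ℝ) : ℂ) * I j β) * Q β (appE (A ^ (-j)) x)‖
        ≤ ∑ β ∈ mIdx n s, ‖(((b ^ (-j) : ℝ) : ℂ) * I j β) * Q β (appE (A ^ (-j)) x)‖ :=
          norm_sum_le _ _
      _ ≤ ∑ β ∈ mIdx n s, b ^ (-j : ℤ) * (‖I j β‖ * K β) := by
          refine Finset.sum_le_sum fun β hβ => ?_
          rw [norm_mul, norm_mul, Complex.norm_real, Real.norm_eq_abs,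
            abs_of_pos (zpow_pos hbpos _), mul_assoc]
          refine mul_le_mul_of_nonneg_left ?_ (zpow_nonneg hbpos.le _)
          exact mul_le_mul_of_nonneg_left (hK β hβ _ ((hmemB j x).1 hx)) (norm_nonneg _)
      _ = b ^ (-j : ℤ) * C j := by rw [hC, Finset.mul_sum]
  -- integrability of the two indicator pieces
  have hInd1 : ∀ j : ℤ, Integrable
      (Set.indicator (E.B j) fun y => ‖projQ s A b E.B Q M j y‖) volume := by
    intro j
    rw [integrable_indicator_iff (hmeasB j)]
    refine Measure.integrableOn_of_bounded (M := b ^ (-j : ℤ) * C j) (hvolBfin j)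
      ((hπcont j).norm.aestronglyMeasurable) ?_
    refine ae_restrict_of_forall_mem (hmeasB j) fun x hx => ?_
    rw [norm_norm]
    exact hπbound j x hx
  have hInd2 : ∀ j : ℤ, Integrable
      (Set.indicator (E.B j)ᶜ fun y => ‖M y‖) volume := fun j =>
    hMint.norm.indicator (hmeasB j).compl
  -- pointwise decomposition of the integrand
  have hsplit : ∀ (j : ℤ) (x : Euc n),
      ‖Set.indicator (E.B j) (fun y => M y - projQ s A b E.B Q M j y) x - M x‖ =
      Set.indicator (E.B j) (fun y => ‖projQ s A b E.B Q M j y‖) x +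
        Set.indicator (E.B j)ᶜ (fun y => ‖M y‖) x := by
    intro j x
    by_cases hx : x ∈ E.B j
    · rw [Set.indicator_of_mem hx, Set.indicator_of_mem hx,
        Set.indicator_of_notMem (by simpa using hx)]
      rw [sub_sub_cancel_left, norm_neg, add_zero]
    · rw [Set.indicator_of_notMem hx, Set.indicator_of_notMem hx,
        Set.indicator_of_mem (Set.mem_compl hx)]
      rw [zero_sub, norm_neg, zero_add]
  have hEq : ∀ j : ℤ,
      ∫ x : Euc n, ‖Set.indicator (E.B j) (fun y => M y - projQ s A b E.B Q M j y) x - M x‖ =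
      (∫ x : Euc n, Set.indicator (E.B j) (fun y => ‖projQ s A b E.B Q M j y‖) x) +
        ∫ x : Euc n, Set.indicator (E.B j)ᶜ (fun y => ‖M y‖) x := by
    intro j
    rw [show (fun x : Euc n =>
        ‖Set.indicator (E.B j) (fun y => M y - projQ s A b E.B Q M j y) x - M x‖) =
        fun x : Euc n => Set.indicator (E.B j) (fun y => ‖projQ s A b E.B Q M j y‖) x +
          Set.indicator (E.B j)ᶜ (fun y => ‖M y‖) x from funext (hsplit j)]
    exact integral_add (hInd1 j) (hInd2 j)
  -- first piece tends to 0
  have hT1le : ∀ j : ℤ,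
      (∫ x : Euc n, Set.indicator (E.B j) (fun y => ‖projQ s A b E.B Q M j y‖) x) ≤ C j := by
    intro j
    have hle : (∫ x : Euc n, Set.indicator (E.B j) (fun y => ‖projQ s A b E.B Q M j y‖) x) ≤
        ∫ x : Euc n, Set.indicator (E.B j) (fun _ => b ^ (-j : ℤ) * C j) x := by
      refine integral_mono_of_nonneg
        (Eventually.of_forall fun x => Set.indicator_nonneg (fun y _ => norm_nonneg _) x)
        ((integrable_indicator_iff (hmeasB j)).2
          (integrableOn_const (hvolBfin j)))
        (Eventually.of_forall fun x => ?_)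
      by_cases hx : x ∈ E.B j
      · rw [Set.indicator_of_mem hx, Set.indicator_of_mem hx]
        exact hπbound j x hx
      · rw [Set.indicator_of_notMem hx, Set.indicator_of_notMem hx]
    rw [integral_indicator_const _ (hmeasB j), measureReal_def, hvolBr j, smul_eq_mul, ← mul_assoc,
      ← zpow_add₀ hbne, add_neg_cancel, zpow_zero, one_mul] at hle
    exact hle
  have hT1 : Tendsto (fun j : ℤ =>
      ∫ x : Euc n, Set.indicator (E.B j) (fun y => ‖projQ s A b E.B Q M j y‖) x)
      atTop (𝓝 0) := by
    refine tendsto_of_tendsto_of_tendsto_of_le_of_le tendsto_const_nhds hCtend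
      (fun j => integral_nonneg fun x => Set.indicator_nonneg (fun y _ => norm_nonneg _) x)
      hT1le
  -- second piece tends to 0
  have hT2 : Tendsto (fun j : ℤ =>
      ∫ x : Euc n, Set.indicator (E.B j)ᶜ (fun y => ‖M y‖) x) atTop (𝓝 0) := by
    have key : Tendsto (fun j : ℤ =>
        ∫ x : Euc n, Set.indicator (E.B j)ᶜ (fun y => ‖M y‖) x) atTop
        (𝓝 (∫ _ : Euc n, (0 : ℝ))) := by
      refine tendsto_integral_filter_of_dominated_convergence (bound := fun x => ‖M x‖)
        ?_ ?_ hMint.norm ?_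
      · exact Eventually.of_forall fun j =>
          hMint.norm.aestronglyMeasurable.indicator (hmeasB j).compl
      · refine Eventually.of_forall fun j => Eventually.of_forall fun x => ?_
        by_cases hx : x ∈ (E.B j)ᶜ
        · rw [Set.indicator_of_mem hx, norm_norm]
        · rw [Set.indicator_of_notMem hx, norm_zero]
          exact norm_nonneg _
      · refine Eventually.of_forall fun x => ?_
        refine tendsto_const_nhds.congr' ?_
        filter_upwards [hmemEv x] with j hj
        exact (Set.indicator_of_notMem (by simpa using hj) _).symm
    simpa using key
  -- conclusion
  have := hT1.add hT2
  rw [add_zero] at this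
  exact this.congr fun j => (hEq j).symm
end
end
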